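/- Let γ ∈ ℝ, m ∈ ℕ, and α₀ < α₁ < ⋯ < α_{m+1} be real numbers. For j = 0,…,m let ψ_j : ℝ → ℝ be twice differentiable on an open interval containing [α_j, α_{j+1}] with ψ_j''(t) ≤ γ for all t in that interval. Suppose that for j = 0,…,m−1 one has ψ_j(α_{j+1}) = ψ_{j+1}(α_{j+1}) (continuity matching at the breakpoints) and ψ_{j+1}'(α_{j+1}) ≤ ψ_j'(α_{j+1}) (the derivative can only jump downward at the breakpoints). Then ψ_m(α_{m+1}) ≤ ψ₀(α₀) + ψ₀'(α₀)(α_{m+1} − α₀) + (γ/2)(α_{m+1} − α₀)². -/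

import Mathlib

/-!
On one piece, the mean value theorem applied to `ψ'` and then to `ψ - γ (t - x)² / 2` gives
`ψ' ≤ Q'` and `ψ ≤ Q` for the quadratic `Q` with `Q(x) = ψ(x)`, `Q'(x) = ψ'(x)` and `Q'' = γ`.
Both bounds pass to the next piece, since values agree at a breakpoint and the derivative only
drops there, and a quadratic with second derivative `γ` is determined by its value and slope at
any one point: the same `Q` bounds every piece.
-/

open Set

section OnePiece

variable {ψ : ℝ → ℝ} {γ x y : ℝ}

theorem deriv_le_of_deriv2_le (hxy : x ≤ y) (hψ' : ∀ t ∈ Icc x y, DifferentiableAt ℝ (deriv ψ) t)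
    (h2 : ∀ t ∈ Ioo x y, deriv (deriv ψ) t ≤ γ) :
    deriv ψ y ≤ deriv ψ x + γ * (y - x) := by
  have := (convex_Icc x y).image_sub_le_mul_sub_of_deriv_le
    (fun t ht => (hψ' t ht).continuousAt.continuousWithinAt)
    (fun t ht => (hψ' t (interior_subset ht)).differentiableWithinAt)
    (by rwa [interior_Icc]) x (left_mem_Icc.2 hxy) y (right_mem_Icc.2 hxy) hxy
  linarith

theorem le_taylor_of_deriv2_le (hxy : x ≤ y) (hψ : ∀ t ∈ Icc x y, DifferentiableAt ℝ ψ t)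
    (hψ' : ∀ t ∈ Icc x y, DifferentiableAt ℝ (deriv ψ) t)
    (h2 : ∀ t ∈ Ioo x y, deriv (deriv ψ) t ≤ γ) :
    ψ y ≤ ψ x + deriv ψ x * (y - x) + γ / 2 * (y - x) ^ 2 := by
  set g : ℝ → ℝ := fun t => ψ t - γ / 2 * (t - x) ^ 2
  have hg : ∀ t ∈ Icc x y, HasDerivAt g (deriv ψ t - γ * (t - x)) t := fun t ht => by
    refine ((hψ t ht).hasDerivAt.sub
      ((((hasDerivAt_id t).sub_const x).pow 2).const_mul (γ / 2))).congr_deriv ?_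
    simp only [id_eq, Nat.cast_ofNat]
    ring
  have hg_le : ∀ t ∈ interior (Icc x y), deriv g t ≤ deriv ψ x := fun t ht => by
    rw [interior_Icc] at ht
    have hsub : Icc x t ⊆ Icc x y := Icc_subset_Icc_right ht.2.le
    rw [(hg t (Ioo_subset_Icc_self ht)).deriv]
    linarith [deriv_le_of_deriv2_le ht.1.le (fun s hs => hψ' s (hsub hs))
      (fun s hs => h2 s (Ioo_subset_Ioo_right ht.2.le hs))]
  have := (convex_Icc x y).image_sub_le_mul_sub_of_deriv_le
    (fun t ht => (hg t ht).continuousAt.continuousWithinAt)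
    (fun t ht => (hg t (interior_subset ht)).differentiableAt.differentiableWithinAt)
    hg_le x (left_mem_Icc.2 hxy) y (right_mem_Icc.2 hxy) hxy
  simp only [g, sub_self] at this
  linarith

theorem le_quadratic_of_deriv2_le (x₀ v d : ℝ) (hxy : x ≤ y)
    (hψ : ∀ t ∈ Icc x y, DifferentiableAt ℝ ψ t)
    (hψ' : ∀ t ∈ Icc x y, DifferentiableAt ℝ (deriv ψ) t)
    (h2 : ∀ t ∈ Ioo x y, deriv (deriv ψ) t ≤ γ)
    (hv : ψ x ≤ v + d * (x - x₀) + γ / 2 * (x - x₀) ^ 2) (hd : deriv ψ x ≤ d + γ * (x - x₀)) :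
    ψ y ≤ v + d * (y - x₀) + γ / 2 * (y - x₀) ^ 2 ∧ deriv ψ y ≤ d + γ * (y - x₀) := by
  have hslope := mul_le_mul_of_nonneg_right hd (sub_nonneg.2 hxy)
  constructor
  · nlinarith [le_taylor_of_deriv2_le hxy hψ hψ' h2]
  · linarith [deriv_le_of_deriv2_le hxy hψ' h2]

end OnePiece

theorem piecewise_le_quadratic {γ : ℝ} {m : ℕ} {α : ℕ → ℝ} {ψ : ℕ → ℝ → ℝ}
    (hα : ∀ j ≤ m, α j ≤ α (j + 1))
    (hpiece : ∀ j ≤ m, ∀ t ∈ Icc (α j) (α (j + 1)), DifferentiableAt ℝ (ψ j) t ∧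
      DifferentiableAt ℝ (deriv (ψ j)) t ∧ deriv (deriv (ψ j)) t ≤ γ)
    (hmatch : ∀ j < m, ψ j (α (j + 1)) = ψ (j + 1) (α (j + 1)))
    (hjump : ∀ j < m, deriv (ψ (j + 1)) (α (j + 1)) ≤ deriv (ψ j) (α (j + 1))) :
    ψ m (α (m + 1)) ≤ ψ 0 (α 0) + deriv (ψ 0) (α 0) * (α (m + 1) - α 0) +
        γ / 2 * (α (m + 1) - α 0) ^ 2 ∧
      deriv (ψ m) (α (m + 1)) ≤ deriv (ψ 0) (α 0) + γ * (α (m + 1) - α 0) := by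
  set v := ψ 0 (α 0)
  set d := deriv (ψ 0) (α 0)
  have step : ∀ j ≤ m, ψ j (α j) ≤ v + d * (α j - α 0) + γ / 2 * (α j - α 0) ^ 2 →
      deriv (ψ j) (α j) ≤ d + γ * (α j - α 0) →
      ψ j (α (j + 1)) ≤ v + d * (α (j + 1) - α 0) + γ / 2 * (α (j + 1) - α 0) ^ 2 ∧
      deriv (ψ j) (α (j + 1)) ≤ d + γ * (α (j + 1) - α 0) := fun j hj =>
    le_quadratic_of_deriv2_le (α 0) v d (hα j hj) (fun t ht => (hpiece j hj t ht).1)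
      (fun t ht => (hpiece j hj t ht).2.1)
      (fun t ht => (hpiece j hj t (Ioo_subset_Icc_self ht)).2.2)
  suffices ∀ k ≤ m,
      ψ k (α (k + 1)) ≤ v + d * (α (k + 1) - α 0) + γ / 2 * (α (k + 1) - α 0) ^ 2 ∧
      deriv (ψ k) (α (k + 1)) ≤ d + γ * (α (k + 1) - α 0) from this m le_rfl
  intro k hk
  induction k with
  | zero => exact step 0 hk (by simp [v]) (by simp [d])
  | succ k ih =>
    obtain ⟨hv, hd⟩ := ih (by omega)
    exact step (k + 1) hk (hmatch k (by omega) ▸ hv) ((hjump k (by omega)).trans hd)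

theorem stmt_1 (γ : ℝ) (m : ℕ) (α : ℕ → ℝ) (ψ : ℕ → ℝ → ℝ)
    (hα : ∀ j ≤ m, α j < α (j + 1))
    (hdiff : ∀ j ≤ m, ∃ a b : ℝ, a < α j ∧ α (j + 1) < b ∧
      ∀ t ∈ Set.Ioo a b, DifferentiableAt ℝ (ψ j) t ∧
        DifferentiableAt ℝ (deriv (ψ j)) t ∧ deriv (deriv (ψ j)) t ≤ γ)
    (hmatch : ∀ j < m, ψ j (α (j + 1)) = ψ (j + 1) (α (j + 1)))
    (hjump : ∀ j < m, deriv (ψ (j + 1)) (α (j + 1)) ≤ deriv (ψ j) (α (j + 1))) :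
    ψ m (α (m + 1)) ≤ ψ 0 (α 0) + deriv (ψ 0) (α 0) * (α (m + 1) - α 0) +
      γ / 2 * (α (m + 1) - α 0) ^ 2 := by
  refine (piecewise_le_quadratic (fun j hj => (hα j hj).le) (fun j hj t ht => ?_) hmatch hjump).1
  obtain ⟨a, b, ha, hb, h⟩ := hdiff j hj
  exact h t (Icc_subset_Ioo ha hb ht)
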